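/- arXiv:2309.05255 — 2 statements merged into one kernel-verified Lean document; each statement's English description precedes it below -/
import Mathlib

section
/- The quantity |||v||| = (∑_T ‖∇_w v‖²_T + h_T^{-1} ‖Q_b v₀ − v_b‖²_{∂T})^{1/2} defines a norm on the space V_h⁰ of weak finite element functions with v_b = 0 on the boundary Γ; in particular, |||v||| = 0 implies v₀ ≡ 0 and v_b ≡ 0. -/
open Matrix

/-- `|||·|||` is a norm on `V_h⁰`: the definiteness property.  The mesh of the
connected domain is encoded combinatorially: elements `t : ι` (with volumes
`vol t > 0`, mesh sizes `h t > 0` and face sets `F t`), faces `e : ε` (with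
areas `area e > 0`, barycenters `cbar e`, and per-element outward unit normals
`n t e`), boundary faces `Bdry` on which `v_b = 0`, face-connectivity of the
mesh (`hconn`), and Green's identity for the elementwise affine functions `v₀`
(`hGreen`).  A function `v = {v₀, v_b} ∈ V_h⁰` has `v₀|_T` affine on each
element and `v_b` constant on each face; `Q_b v₀` on a face is the value of the
affine `v₀` at the face barycenter, the weak gradient on `t` is the matrix
`(vol t)⁻¹ ∑_{e ⊂ ∂T} area e · v_b ⊗ n`, and
`|||v|||² = ∑_T ‖∇_w v‖²_T + h_T⁻¹ ‖Q_b v₀ − v_b‖²_{∂T}`.  If `|||v||| = 0`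
then `v₀ ≡ 0` and `v_b ≡ 0`. -/
theorem stmt6 (d : ℕ) (ι ε : Type*) [Fintype ι] [Fintype ε] [Nonempty ι]
    (F : ι → Finset ε) (Bdry : Finset ε)
    (vol h : ι → ℝ) (area : ε → ℝ)
    (n : ι → ε → Fin d → ℝ) (cbar : ε → Fin d → ℝ)
    (v0 : ι → ((Fin d → ℝ) →ᵃ[ℝ] (Fin d → ℝ))) (vb : ε → Fin d → ℝ)
    (hvol : ∀ t, 0 < vol t) (hh : ∀ t, 0 < h t) (harea : ∀ e, 0 < area e)
    (helt : ∀ t, (F t).Nonempty)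
    (hGreen : ∀ t, ∀ τ : Matrix (Fin d) (Fin d) ℝ,
      ∑ e ∈ F t, area e * ((v0 t (cbar e)) ⬝ᵥ (τ *ᵥ n t e)) =
        vol t * ∑ i, ∑ j, ((v0 t).linear (Pi.single j 1) i) * τ i j)
    (hconn : ∀ t t',
      Relation.ReflTransGen (fun s s' => ∃ e, e ∈ F s ∧ e ∈ F s') t t')
    (hfaces : ∀ e, ∃ t, e ∈ F t)
    (hint : ∀ e, e ∉ Bdry → ∃ t t', t ≠ t' ∧ e ∈ F t ∧ e ∈ F t')
    (hbdryv : ∀ e ∈ Bdry, vb e = 0)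
    (hbdrytouch : ∃ t, ∃ e ∈ F t, e ∈ Bdry)
    (hnorm : ∑ t,
        (vol t * ∑ i, ∑ j,
            ((vol t)⁻¹ * ∑ e ∈ F t, area e * (vb e i * n t e j)) ^ 2 +
          (h t)⁻¹ * ∑ e ∈ F t,
            area e * ∑ i, (v0 t (cbar e) i - vb e i) ^ 2) = 0) :
    (∀ t x, v0 t x = 0) ∧ (∀ e, vb e = 0) := by
  classical
  -- each summand of hnorm is zero
  have hterm : ∀ t : ι,
      vol t * ∑ i, ∑ j,
          ((vol t)⁻¹ * ∑ e ∈ F t, area e * (vb e i * n t e j)) ^ 2 +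
        (h t)⁻¹ * ∑ e ∈ F t,
          area e * ∑ i, (v0 t (cbar e) i - vb e i) ^ 2 = 0 := by
    have hnn : ∀ t : ι, (0:ℝ) ≤
        vol t * ∑ i, ∑ j,
            ((vol t)⁻¹ * ∑ e ∈ F t, area e * (vb e i * n t e j)) ^ 2 +
          (h t)⁻¹ * ∑ e ∈ F t,
            area e * ∑ i, (v0 t (cbar e) i - vb e i) ^ 2 := by
      intro t
      refine add_nonneg (mul_nonneg (hvol t).le ?_) (mul_nonneg (inv_nonneg.mpr (hh t).le) ?_)
      · exact Finset.sum_nonneg fun i _ => Finset.sum_nonneg fun j _ => sq_nonneg _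
      · exact Finset.sum_nonneg fun e _ => mul_nonneg (harea e).le
          (Finset.sum_nonneg fun i _ => sq_nonneg _)
    intro t
    exact (Finset.sum_eq_zero_iff_of_nonneg (fun t _ => hnn t)).mp hnorm t (Finset.mem_univ t)
  -- split each
  have hA : ∀ t, ∀ i j : Fin d, ∑ e ∈ F t, area e * (vb e i * n t e j) = 0 := by
    intro t i j
    have h1 := hterm t
    have hx : vol t * ∑ i, ∑ j,
        ((vol t)⁻¹ * ∑ e ∈ F t, area e * (vb e i * n t e j)) ^ 2 = 0 := by
      have hn1 : (0:ℝ) ≤ vol t * ∑ i, ∑ j,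
          ((vol t)⁻¹ * ∑ e ∈ F t, area e * (vb e i * n t e j)) ^ 2 :=
        mul_nonneg (hvol t).le
          (Finset.sum_nonneg fun i _ => Finset.sum_nonneg fun j _ => sq_nonneg _)
      have hn2 : (0:ℝ) ≤ (h t)⁻¹ * ∑ e ∈ F t,
          area e * ∑ i, (v0 t (cbar e) i - vb e i) ^ 2 :=
        mul_nonneg (inv_nonneg.mpr (hh t).le)
          (Finset.sum_nonneg fun e _ => mul_nonneg (harea e).le
            (Finset.sum_nonneg fun i _ => sq_nonneg _))
      linarith
    have hs : ∑ i, ∑ j, ((vol t)⁻¹ * ∑ e ∈ F t, area e * (vb e i * n t e j)) ^ 2 = 0 :=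
      (mul_eq_zero.mp hx).resolve_left (hvol t).ne'
    have h2 : ((vol t)⁻¹ * ∑ e ∈ F t, area e * (vb e i * n t e j)) ^ 2 = 0 := by
      have := (Finset.sum_eq_zero_iff_of_nonneg
        (fun i _ => Finset.sum_nonneg fun j _ => sq_nonneg _)).mp hs i (Finset.mem_univ i)
      exact (Finset.sum_eq_zero_iff_of_nonneg
        (fun j _ => sq_nonneg _)).mp this j (Finset.mem_univ j)
    have h3 := pow_eq_zero_iff (n := 2) (by norm_num) |>.mp h2
    exact (mul_eq_zero.mp h3).resolve_left (inv_ne_zero (hvol t).ne')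
  have hB : ∀ t, ∀ e ∈ F t, ∀ i, v0 t (cbar e) i = vb e i := by
    intro t e he i
    have h1 := hterm t
    have hn1 : (0:ℝ) ≤ vol t * ∑ i, ∑ j,
        ((vol t)⁻¹ * ∑ e ∈ F t, area e * (vb e i * n t e j)) ^ 2 :=
      mul_nonneg (hvol t).le
        (Finset.sum_nonneg fun i _ => Finset.sum_nonneg fun j _ => sq_nonneg _)
    have hn2 : (0:ℝ) ≤ (h t)⁻¹ * ∑ e ∈ F t,
        area e * ∑ i, (v0 t (cbar e) i - vb e i) ^ 2 :=
      mul_nonneg (inv_nonneg.mpr (hh t).le)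
        (Finset.sum_nonneg fun e _ => mul_nonneg (harea e).le
          (Finset.sum_nonneg fun i _ => sq_nonneg _))
    have hx : (h t)⁻¹ * ∑ e ∈ F t,
        area e * ∑ i, (v0 t (cbar e) i - vb e i) ^ 2 = 0 := by linarith
    have hs : ∑ e ∈ F t, area e * ∑ i, (v0 t (cbar e) i - vb e i) ^ 2 = 0 :=
      (mul_eq_zero.mp hx).resolve_left (inv_ne_zero (hh t).ne')
    have h2 : area e * ∑ i, (v0 t (cbar e) i - vb e i) ^ 2 = 0 :=
      (Finset.sum_eq_zero_iff_of_nonneg (fun e _ => mul_nonneg (harea e).le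
        (Finset.sum_nonneg fun i _ => sq_nonneg _))).mp hs e he
    have h3 : ∑ i, (v0 t (cbar e) i - vb e i) ^ 2 = 0 :=
      (mul_eq_zero.mp h2).resolve_left (harea e).ne'
    have h4 : (v0 t (cbar e) i - vb e i) ^ 2 = 0 :=
      (Finset.sum_eq_zero_iff_of_nonneg (fun i _ => sq_nonneg _)).mp h3 i (Finset.mem_univ i)
    have := pow_eq_zero_iff (n := 2) (by norm_num) |>.mp h4
    linarith
  -- the linear part of v0 t vanishes
  have hlinB : ∀ t, ∀ i j : Fin d, (v0 t).linear (Pi.single j 1) i = 0 := by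
    intro t
    set L : Matrix (Fin d) (Fin d) ℝ :=
      Matrix.of fun i j => (v0 t).linear (Pi.single j 1) i with hLdef
    have hG := hGreen t L
    have hLHS : ∑ e ∈ F t, area e * ((v0 t (cbar e)) ⬝ᵥ (L *ᵥ n t e)) = 0 := by
      have hre : ∀ e ∈ F t, area e * ((v0 t (cbar e)) ⬝ᵥ (L *ᵥ n t e)) =
          ∑ i, ∑ j, L i j * (area e * (vb e i * n t e j)) := by
        intro e he
        simp only [dotProduct, Matrix.mulVec, Finset.mul_sum]
        refine Finset.sum_congr rfl fun i _ => Finset.sum_congr rfl fun j _ => ?_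
        rw [hB t e he i]; ring
      rw [Finset.sum_congr rfl hre, Finset.sum_comm]
      refine Finset.sum_eq_zero fun i _ => ?_
      rw [Finset.sum_comm]
      refine Finset.sum_eq_zero fun j _ => ?_
      rw [← Finset.mul_sum, hA t i j, mul_zero]
    rw [hLHS] at hG
    have hsum : ∑ i, ∑ j, ((v0 t).linear (Pi.single j 1) i) ^ 2 = 0 := by
      have hv : vol t * ∑ i, ∑ j, ((v0 t).linear (Pi.single j 1) i) * L i j = 0 := hG.symm
      have := (mul_eq_zero.mp hv).resolve_left (hvol t).ne'
      calc ∑ i, ∑ j, ((v0 t).linear (Pi.single j 1) i) ^ 2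
          = ∑ i, ∑ j, ((v0 t).linear (Pi.single j 1) i) * L i j := by
            refine Finset.sum_congr rfl fun i _ => Finset.sum_congr rfl fun j _ => ?_
            simp [hLdef, sq]
        _ = 0 := this
    intro i j
    have h2 : ((v0 t).linear (Pi.single j 1) i) ^ 2 = 0 := by
      have := (Finset.sum_eq_zero_iff_of_nonneg
        (fun i _ => Finset.sum_nonneg fun j _ => sq_nonneg _)).mp hsum i (Finset.mem_univ i)
      exact (Finset.sum_eq_zero_iff_of_nonneg
        (fun j _ => sq_nonneg _)).mp this j (Finset.mem_univ j)
    exact pow_eq_zero_iff (n := 2) (by norm_num) |>.mp h2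
  have hlin : ∀ t, ∀ x : Fin d → ℝ, (v0 t).linear x = 0 := by
    intro t x
    have hx : x = ∑ j, Pi.single j (x j) := (Finset.univ_sum_single x).symm
    rw [hx, map_sum]
    refine Finset.sum_eq_zero fun j _ => ?_
    have hsing : Pi.single j (x j) = x j • (Pi.single j 1 : Fin d → ℝ) := by
      rw [← Pi.single_smul, smul_eq_mul, mul_one]
    rw [hsing, LinearMap.map_smul]
    have : (v0 t).linear (Pi.single j 1) = 0 := funext fun i => hlinB t i j
    rw [this, smul_zero]
  -- v0 t is constant
  have hconst : ∀ t, ∀ x : Fin d → ℝ, v0 t x = v0 t 0 := by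
    intro t x
    have := AffineMap.decomp (v0 t)
    calc v0 t x = (v0 t).linear x + v0 t 0 := by
          conv_lhs => rw [this]
          rfl
      _ = v0 t 0 := by rw [hlin t x, zero_add]
  set c : ι → (Fin d → ℝ) := fun t => v0 t 0 with hc
  have hvbc : ∀ t, ∀ e ∈ F t, vb e = c t := by
    intro t e he
    funext i
    rw [← hB t e he i, hconst t (cbar e)]
  have hsame : ∀ t t', c t = c t' := by
    intro t t'
    induction hconn t t' with
    | refl => rfl
    | tail _ hr ih =>
        obtain ⟨e, he1, he2⟩ := hr
        rw [ih, ← hvbc _ e he1, hvbc _ e he2]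
  obtain ⟨t0, e0, he0F, he0B⟩ := hbdrytouch
  have hc0 : ∀ t, c t = 0 := by
    intro t
    rw [hsame t t0, ← hvbc t0 e0 he0F, hbdryv e0 he0B]
  constructor
  · intro t x
    rw [hconst t x]
    exact hc0 t
  · intro e
    obtain ⟨t, ht⟩ := hfaces e
    rw [hvbc t e ht, hc0 t]
end

section
/- For u ∈ [H²(T)]^d on a shape-regular simplex T, the stabilizer term satisfies |h_T^{-1}⟨Q₀u − u, Q_b v₀ − v_b⟩_{∂T}| ≤ C (h_T^{-2}‖Q₀u − u‖²_T + ‖∇(Q₀u − u)‖²_T)^{1/2} · (h_T^{-1}‖Q_b v₀ − v_b‖²_{∂T})^{1/2}, by the Cauchy–Schwarz and trace inequalities; summing and applying ‖Q₀u − u‖_{T} ≤ Ch_T²‖u‖_{2,T} and ‖∇(Q₀u − u)‖_T ≤ Ch_T‖u‖_{2,T} yields |s(Q_h u, v)| ≤ C h ‖u‖₂ |||v|||. -/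
/-- Estimate of the stabilizer term `s(Q_h u, v)`.  Per element `t` of the
shape-regular mesh: `ht t = h_T`, `pT t = ‖Q₀u − u‖_T`,
`pG t = ‖∇(Q₀u − u)‖_T`, `pB t = ‖Q₀u − u‖_{∂T}`,
`qB t = ‖Q_b v₀ − v_b‖_{∂T}`, `I t = ⟨Q₀u − u, Q_b v₀ − v_b⟩_{∂T}`
(note `Q_b Q₀ u − Q_b u = Q_b(Q₀u − u)` and
`⟨Q_b(Q₀u−u), Q_b v₀ − v_b⟩ = ⟨Q₀u − u, Q_b v₀ − v_b⟩`), and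
`u2 t = ‖u‖_{2,T}`.  Assuming the Cauchy–Schwarz inequality (`hCS`), the trace
inequality `‖φ‖²_{∂T} ≤ Ctr(h_T⁻¹‖φ‖²_T + h_T‖∇φ‖²_T)` (`htrace`), the
projection estimates `‖Q₀u − u‖_T ≤ Ca h_T² ‖u‖_{2,T}`,
`‖∇(Q₀u − u)‖_T ≤ Ca h_T ‖u‖_{2,T}`, `h_T ≤ h`, `∑_T ‖u‖²_{2,T} ≤ ‖u‖₂²`
(`U2 = ‖u‖₂`) and `∑_T h_T⁻¹ ‖Q_b v₀ − v_b‖²_{∂T} ≤ |||v|||²` (`Nv = |||v|||`),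
one gets the elementwise bound
`|h_T⁻¹ ⟨Q₀u − u, Q_b v₀ − v_b⟩_{∂T}|
  ≤ C (h_T⁻²‖Q₀u − u‖²_T + ‖∇(Q₀u − u)‖²_T)^{1/2} (h_T⁻¹‖Q_b v₀ − v_b‖²_{∂T})^{1/2}`
and, after summing, `|s(Q_h u, v)| ≤ C h ‖u‖₂ |||v|||`. -/
theorem stmt14 (ι : Type*) [Fintype ι]
    (ht pT pG pB qB I u2 : ι → ℝ) (h U2 Nv Ctr Ca : ℝ)
    (hht : ∀ t, 0 < ht t) (hhtb : ∀ t, ht t ≤ h)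
    (hpT : ∀ t, 0 ≤ pT t) (hpG : ∀ t, 0 ≤ pG t) (hpB : ∀ t, 0 ≤ pB t)
    (hqB : ∀ t, 0 ≤ qB t) (hu2 : ∀ t, 0 ≤ u2 t)
    (hCtr : 0 < Ctr) (hCa : 0 < Ca)
    (hhpos : 0 ≤ h) (hU2 : 0 ≤ U2) (hNv : 0 ≤ Nv)
    (hCS : ∀ t, |I t| ≤ pB t * qB t)
    (htrace : ∀ t, pB t ^ 2 ≤ Ctr * ((ht t)⁻¹ * pT t ^ 2 + ht t * pG t ^ 2))
    (happ1 : ∀ t, pT t ≤ Ca * ht t ^ 2 * u2 t)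
    (happ2 : ∀ t, pG t ≤ Ca * ht t * u2 t)
    (hsum1 : ∑ t, u2 t ^ 2 ≤ U2 ^ 2)
    (hsum2 : ∑ t, (ht t)⁻¹ * qB t ^ 2 ≤ Nv ^ 2) :
    ∃ C > 0,
      (∀ t, |(ht t)⁻¹ * I t| ≤
        C * Real.sqrt ((ht t)⁻¹ * (ht t)⁻¹ * pT t ^ 2 + pG t ^ 2) *
          Real.sqrt ((ht t)⁻¹ * qB t ^ 2)) ∧
      |∑ t, (ht t)⁻¹ * I t| ≤ C * h * U2 * Nv := by
  classical
  have aux : ∀ x q p g : ℝ, x ≠ 0 →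
      x⁻¹ ^ 2 * q * (Ctr * (x⁻¹ * p + x * g)) = Ctr * (x⁻¹ * x⁻¹ * p + g) * (x⁻¹ * q) := by
    intro x q p g hx; field_simp
  set A : ι → ℝ := fun t => (ht t)⁻¹ * (ht t)⁻¹ * pT t ^ 2 + pG t ^ 2 with hA
  set B : ι → ℝ := fun t => (ht t)⁻¹ * qB t ^ 2 with hB
  have hAnn : ∀ t, 0 ≤ A t := fun t => by
    have := (hht t).le; positivity
  have hBnn : ∀ t, 0 ≤ B t := fun t => by
    have := (hht t).le; positivity
  have hCbig : Real.sqrt Ctr ≤ Real.sqrt Ctr * (1 + Real.sqrt 2 * Ca) := by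
    have h1 := mul_nonneg (Real.sqrt_nonneg Ctr)
      (mul_nonneg (Real.sqrt_nonneg 2) hCa.le)
    nlinarith [h1]
  have key : ∀ t, (ht t)⁻¹ * pB t * qB t ≤
      Real.sqrt Ctr * Real.sqrt (A t) * Real.sqrt (B t) := by
    intro t
    have hhi : 0 < (ht t)⁻¹ := inv_pos.2 (hht t)
    have h1 : ((ht t)⁻¹ * pB t * qB t) ^ 2 ≤ Ctr * A t * B t := by
      have h3 := mul_le_mul_of_nonneg_left (htrace t)
          (by positivity : (0:ℝ) ≤ (ht t)⁻¹ ^ 2 * qB t ^ 2)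
      have h4 := aux (ht t) (qB t ^ 2) (pT t ^ 2) (pG t ^ 2) (hht t).ne'
      have h2 : ((ht t)⁻¹ * pB t * qB t) ^ 2
          = (ht t)⁻¹ ^ 2 * qB t ^ 2 * pB t ^ 2 := by ring
      rw [h2]
      calc (ht t)⁻¹ ^ 2 * qB t ^ 2 * pB t ^ 2
          ≤ (ht t)⁻¹ ^ 2 * qB t ^ 2 *
            (Ctr * ((ht t)⁻¹ * pT t ^ 2 + ht t * pG t ^ 2)) := h3
        _ = Ctr * A t * B t := h4
    have h5 := Real.sqrt_le_sqrt h1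
    rwa [Real.sqrt_sq (mul_nonneg (mul_nonneg hhi.le (hpB t)) (hqB t)),
      Real.sqrt_mul (mul_nonneg hCtr.le (hAnn t)),
      Real.sqrt_mul hCtr.le] at h5
  have elem : ∀ t, |(ht t)⁻¹ * I t| ≤ (ht t)⁻¹ * pB t * qB t := by
    intro t
    have hhi : 0 < (ht t)⁻¹ := inv_pos.2 (hht t)
    rw [abs_mul, abs_of_pos hhi, mul_assoc]
    exact mul_le_mul_of_nonneg_left (hCS t) hhi.le
  refine ⟨Real.sqrt Ctr * (1 + Real.sqrt 2 * Ca),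
    mul_pos (Real.sqrt_pos.2 hCtr) (by positivity), ?_, ?_⟩
  · intro t
    refine (elem t).trans ((key t).trans ?_)
    exact mul_le_mul_of_nonneg_right (mul_le_mul_of_nonneg_right hCbig
      (Real.sqrt_nonneg _)) (Real.sqrt_nonneg _)
  · have step1 : |∑ t, (ht t)⁻¹ * I t| ≤ ∑ t, (ht t)⁻¹ * pB t * qB t :=
      (Finset.abs_sum_le_sum_abs _ _).trans (Finset.sum_le_sum fun t _ => elem t)
    have step3 : ∑ t, (ht t)⁻¹ * pB t * qB t ≤
        Real.sqrt Ctr * ∑ t, Real.sqrt (A t) * Real.sqrt (B t) := by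
      rw [Finset.mul_sum]
      exact Finset.sum_le_sum fun t _ => (key t).trans_eq (mul_assoc _ _ _)
    have cs : ∑ t, Real.sqrt (A t) * Real.sqrt (B t) ≤
        Real.sqrt (∑ t, A t) * Real.sqrt (∑ t, B t) :=
      Real.sum_sqrt_mul_sqrt_le _ hAnn hBnn
    have hAsum : ∑ t, A t ≤ 2 * Ca ^ 2 * h ^ 2 * U2 ^ 2 := by
      have hat : ∀ t, A t ≤ 2 * Ca ^ 2 * h ^ 2 * u2 t ^ 2 := by
        intro t
        have h0 := hht t
        have e1 : (ht t)⁻¹ * (ht t)⁻¹ * pT t ^ 2 ≤ Ca ^ 2 * ht t ^ 2 * u2 t ^ 2 := by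
          have hsq : pT t ^ 2 ≤ (Ca * ht t ^ 2 * u2 t) ^ 2 := by
            have := happ1 t
            nlinarith [hpT t]
          have h6 := mul_le_mul_of_nonneg_left hsq
            (by positivity : (0:ℝ) ≤ (ht t)⁻¹ * (ht t)⁻¹)
          have h7 : (ht t)⁻¹ * (ht t)⁻¹ * (Ca * ht t ^ 2 * u2 t) ^ 2
              = Ca ^ 2 * ht t ^ 2 * u2 t ^ 2 := by
            field_simp
          linarith [h6, h7.le, h7.ge]
        have e2 : pG t ^ 2 ≤ Ca ^ 2 * ht t ^ 2 * u2 t ^ 2 := by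
          have := happ2 t
          nlinarith [hpG t]
        have e3 : ht t ^ 2 ≤ h ^ 2 := by nlinarith [h0.le, hhtb t]
        have e4 : Ca ^ 2 * ht t ^ 2 * u2 t ^ 2 ≤ Ca ^ 2 * h ^ 2 * u2 t ^ 2 :=
          mul_le_mul_of_nonneg_right
            (mul_le_mul_of_nonneg_left e3 (sq_nonneg Ca)) (sq_nonneg (u2 t))
        have : A t = (ht t)⁻¹ * (ht t)⁻¹ * pT t ^ 2 + pG t ^ 2 := rfl
        rw [this]; linarith
      calc ∑ t, A t ≤ ∑ t, 2 * Ca ^ 2 * h ^ 2 * u2 t ^ 2 :=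
            Finset.sum_le_sum fun t _ => hat t
        _ = 2 * Ca ^ 2 * h ^ 2 * ∑ t, u2 t ^ 2 := by rw [Finset.mul_sum]
        _ ≤ 2 * Ca ^ 2 * h ^ 2 * U2 ^ 2 :=
            mul_le_mul_of_nonneg_left hsum1 (by positivity)
    have hx : Real.sqrt (∑ t, A t) ≤ Real.sqrt 2 * Ca * h * U2 := by
      have h8 := Real.sqrt_le_sqrt hAsum
      have heq : Real.sqrt (2 * Ca ^ 2 * h ^ 2 * U2 ^ 2)
          = Real.sqrt 2 * Ca * h * U2 := by
        rw [show (2 : ℝ) * Ca ^ 2 * h ^ 2 * U2 ^ 2 = 2 * (Ca * h * U2) ^ 2 by ring,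
          Real.sqrt_mul (by norm_num), Real.sqrt_sq (by positivity)]
        ring
      linarith [h8, heq.le, heq.ge]
    have hy : Real.sqrt (∑ t, B t) ≤ Nv := by
      have h9 := Real.sqrt_le_sqrt hsum2
      rwa [Real.sqrt_sq hNv] at h9
    have hfin : Real.sqrt (∑ t, A t) * Real.sqrt (∑ t, B t) ≤
        Real.sqrt 2 * Ca * h * U2 * Nv :=
      mul_le_mul hx hy (Real.sqrt_nonneg _) (by positivity)
    have hlast : Real.sqrt Ctr * (Real.sqrt 2 * Ca * h * U2 * Nv) ≤
        Real.sqrt Ctr * (1 + Real.sqrt 2 * Ca) * h * U2 * Nv := by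
      have h10 : Real.sqrt Ctr * (Real.sqrt 2 * Ca) ≤
          Real.sqrt Ctr * (1 + Real.sqrt 2 * Ca) := by
        nlinarith [Real.sqrt_nonneg Ctr]
      calc Real.sqrt Ctr * (Real.sqrt 2 * Ca * h * U2 * Nv)
          = Real.sqrt Ctr * (Real.sqrt 2 * Ca) * (h * U2 * Nv) := by ring
        _ ≤ Real.sqrt Ctr * (1 + Real.sqrt 2 * Ca) * (h * U2 * Nv) :=
            mul_le_mul_of_nonneg_right h10 (by positivity)
        _ = Real.sqrt Ctr * (1 + Real.sqrt 2 * Ca) * h * U2 * Nv := by ring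
    calc |∑ t, (ht t)⁻¹ * I t|
        ≤ ∑ t, (ht t)⁻¹ * pB t * qB t := step1
      _ ≤ Real.sqrt Ctr * ∑ t, Real.sqrt (A t) * Real.sqrt (B t) := step3
      _ ≤ Real.sqrt Ctr * (Real.sqrt (∑ t, A t) * Real.sqrt (∑ t, B t)) :=
          mul_le_mul_of_nonneg_left cs (Real.sqrt_nonneg _)
      _ ≤ Real.sqrt Ctr * (Real.sqrt 2 * Ca * h * U2 * Nv) := by
          have := mul_le_mul_of_nonneg_left hfin (Real.sqrt_nonneg Ctr)
          linarith [this]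
      _ ≤ Real.sqrt Ctr * (1 + Real.sqrt 2 * Ca) * h * U2 * Nv := hlast
end
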